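/- arXiv:1605.02528 — 2 statements merged into one kernel-verified Lean document; each statement's English description precedes it below -/
import Mathlib

section
/- Let A and B be algebraic operators on a complex vector space V such that both A and B commute with the product AB (i.e., A(AB) = (AB)A and B(AB) = (AB)B). Then the operator AB is algebraic. -/
/-!
Since `A` commutes with `A * B`, the powers satisfy `(A * B) ^ n = A ^ n * B ^ n`, so they all lie
in the finite-dimensional space `ℂ[A] * ℂ[B]` and are therefore linearly dependent.
-/

theorem mul_pow_of_commute_mul {M : Type*} [Monoid M] {a b : M} (h : Commute a (a * b))
    (n : ℕ) : (a * b) ^ n = a ^ n * b ^ n := by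
  induction n with
  | zero => simp
  | succ n ih =>
    rw [pow_succ', ih, ← mul_assoc, ← (h.pow_left n).eq, pow_succ, pow_succ']
    simp only [mul_assoc]

section

variable {R S : Type*} [CommRing R] [IsNoetherianRing R] [Ring S] [Algebra R S]

theorem IsIntegral.of_forall_pow_mem {M : Submodule R S} (hM : M.FG) {x : S}
    (hx : ∀ n : ℕ, x ^ n ∈ M) : IsIntegral R x := by
  have hle : Subalgebra.toSubmodule (Algebra.adjoin R {x}) ≤ M := by
    rw [Algebra.adjoin_eq_span, Submodule.span_le]
    intro y hy
    obtain ⟨n, rfl⟩ := Submonoid.mem_closure_singleton.mp hy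
    exact hx n
  exact .of_mem_of_fg _ (hM.of_le hle) x (Algebra.self_mem_adjoin_singleton R x)

theorem IsIntegral.mul_of_commute_mul {a b : S} (ha : IsIntegral R a) (hb : IsIntegral R b)
    (h : Commute a (a * b)) : IsIntegral R (a * b) := by
  refine .of_forall_pow_mem (ha.fg_adjoin_singleton.mul hb.fg_adjoin_singleton) fun n => ?_
  rw [mul_pow_of_commute_mul h n]
  exact Submodule.mul_mem_mul (pow_mem (Algebra.self_mem_adjoin_singleton R a) n)
    (pow_mem (Algebra.self_mem_adjoin_singleton R b) n)

end

theorem product_of_algebraic_commuting_with_product_is_algebraic_general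
    {V : Type*} [AddCommGroup V] [Module ℂ V]
    (A B : Module.End ℂ V)
    (hA : IsAlgebraic ℂ A) (hB : IsAlgebraic ℂ B)
    (h1 : A * (A * B) = (A * B) * A) :
    IsAlgebraic ℂ (A * B) :=
  (hA.isIntegral.mul_of_commute_mul hB.isIntegral h1).isAlgebraic

theorem product_of_algebraic_commuting_with_product_is_algebraic
    {V : Type*} [AddCommGroup V] [Module ℂ V]
    (A B : Module.End ℂ V)
    (hA : IsAlgebraic ℂ A) (hB : IsAlgebraic ℂ B)
    (h1 : A * (A * B) = (A * B) * A) (h2 : B * (A * B) = (A * B) * B) :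
    IsAlgebraic ℂ (A * B) :=
  product_of_algebraic_commuting_with_product_is_algebraic_general A B hA hB h1
end

section
/- Every nonscalar polynomially compact bounded operator T on a complex Banach space X of dimension at least 2 has a nontrivial hyperinvariant closed subspace: there exists a closed subspace M of X with {0} ≠ M ≠ X such that S(M) ⊆ M for every bounded operator S on X commuting with T. -/
/-!
If `T` has an eigenvalue `μ`, the eigenspace of `μ` is hyperinvariant, and it is proper because
`T` is nonscalar. Otherwise every `T - μ` is injective, hence so is `K = p(T)`: it is a nonzero
compact operator commuting with the commutant of `T`, on an infinite-dimensional space. A nonzero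
point of the spectrum of `K` is an eigenvalue by the Fredholm alternative, and its eigenspace is
again a proper hyperinvariant subspace for `T`. If instead `K` is quasinilpotent, we follow
Hilden: if every orbit of a nonzero vector under the commutant were dense, compactness of `K`
would yield finitely many operators of the commutant, of norm at most `c`, moving each point of
`K B` back into a ball `B` that stays away from `0`. Iterating, `Pₙ Kⁿ x₀ ∈ B` for operators
`Pₙ` of norm at most `cⁿ`, which contradicts `cⁿ ‖Kⁿ‖ → 0` (Gelfand's formula).
-/

open Polynomial

/-- An operator `T` on a complex Banach space is polynomially compact if there is a
nonzero complex polynomial `p` such that `p(T)` is a compact operator. -/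
def PolyCompact {X : Type*} [NormedAddCommGroup X] [NormedSpace ℂ X]
    (T : X →L[ℂ] X) : Prop :=
  ∃ p : ℂ[X], p ≠ 0 ∧ IsCompactOperator ⇑(aeval T p)

open Module End Filter Topology Metric

theorem Module.End.injective_aeval_of_forall_not_hasEigenvalue {K V : Type*} [Field K]
    [IsAlgClosed K] [AddCommGroup V] [Module K V] {f : End K V}
    (hf : ∀ μ, ¬ f.HasEigenvalue μ) {p : K[X]} (hp : p ≠ 0) :
    Function.Injective (aeval f p) := by
  have hroots : ∀ s : Multiset K, Function.Injective (aeval f (s.map (X - C ·)).prod) := by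
    intro s
    induction s using Multiset.induction_on with
    | empty =>
      simpa only [Multiset.map_zero, Multiset.prod_zero, map_one, coe_one]
        using Function.injective_id
    | cons μ s ih =>
      rw [Multiset.map_cons, Multiset.prod_cons, map_mul, coe_mul, map_sub, aeval_X, aeval_C]
      refine Function.Injective.comp ?_ ih
      rw [← LinearMap.ker_eq_bot, algebraMap_end_eq_smul_id, ← one_eq_id, ← eigenspace_def]
      exact not_not.mp (hf μ)
  have hlc : Function.Injective (aeval f (C p.leadingCoeff)) := by
    rw [aeval_C, algebraMap_end_eq_smul_id]
    exact smul_right_injective V (leadingCoeff_ne_zero.mpr hp)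
  rw [← C_leadingCoeff_mul_prod_multiset_X_sub_C (IsAlgClosed.card_roots_eq_natDegree (p := p)),
    map_mul, coe_mul]
  exact hlc.comp (hroots _)

section NormedSpace

variable {𝕜 X : Type*} [NontriviallyNormedField 𝕜] [NormedAddCommGroup X] [NormedSpace 𝕜 X]

theorem ContinuousLinearMap.coe_aeval (T : X →L[𝕜] X) (p : 𝕜[X]) :
    ((aeval T p : X →L[𝕜] X) : X →ₗ[𝕜] X) = aeval (T : X →ₗ[𝕜] X) p := by
  induction p using Polynomial.induction_on' with
  | add p q hp hq => simp [hp, hq]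
  | monomial n a => simp [aeval_monomial, Algebra.algebraMap_eq_smul_one]

def HasNontrivialHyperinvariantSubspace (T : X →L[𝕜] X) : Prop :=
  ∃ M : Submodule 𝕜 X, IsClosed (M : Set X) ∧ M ≠ ⊥ ∧ M ≠ ⊤ ∧
    ∀ S : X →L[𝕜] X, Commute S T → ∀ x ∈ M, S x ∈ M

theorem hasNontrivialHyperinvariantSubspace_of_hasEigenvalue {T A : X →L[𝕜] X} {μ : 𝕜}
    (hA : ∀ S : X →L[𝕜] X, Commute S T → Commute S A) (hμ : HasEigenvalue (A : End 𝕜 X) μ)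
    (hAμ : A ≠ μ • 1) : HasNontrivialHyperinvariantSubspace T := by
  refine ⟨eigenspace (A : End 𝕜 X) μ, ?_, hμ, ?_, ?_⟩
  · have : (eigenspace (A : End 𝕜 X) μ : Set X) = {x | A x = μ • x} :=
      Set.ext fun _ => mem_eigenspace_iff
    rw [this]
    exact isClosed_eq A.continuous (continuous_const_smul μ)
  · refine fun htop => hAμ (ContinuousLinearMap.ext fun x => ?_)
    exact mem_eigenspace_iff.mp (htop ▸ Submodule.mem_top)
  · intro S hS x hx
    have hAS : Commute (A : End 𝕜 X) S := congrArg ContinuousLinearMap.toLinearMap (hA S hS).eq.symm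
    exact mapsTo_genEigenspace_of_comm hAS μ 1 hx

noncomputable def commutantOrbit (T : X →L[𝕜] X) (y : X) : Submodule 𝕜 X :=
  (Subalgebra.centralizer 𝕜 {T}).toSubmodule.map (ContinuousLinearMap.apply 𝕜 X y).toLinearMap

theorem mem_commutantOrbit {T : X →L[𝕜] X} {y x : X} :
    x ∈ commutantOrbit T y ↔ ∃ S : X →L[𝕜] X, Commute S T ∧ S y = x := by
  simp [commutantOrbit, Subalgebra.mem_centralizer_iff, commute_iff_eq, eq_comm]

theorem dense_commutantOrbit {T : X →L[𝕜] X} (hT : ¬ HasNontrivialHyperinvariantSubspace T)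
    {y : X} (hy : y ≠ 0) : Dense (commutantOrbit T y : Set X) := by
  set M := (commutantOrbit T y).topologicalClosure
  have hyM : y ∈ M := (commutantOrbit T y).le_topologicalClosure
    (mem_commutantOrbit.mpr ⟨1, Commute.one_left T, rfl⟩)
  have hM : ∀ S : X →L[𝕜] X, Commute S T → ∀ x ∈ M, S x ∈ M := by
    intro S hS
    refine Set.MapsTo.closure (fun x hx => ?_) S.continuous
    obtain ⟨S', hS', rfl⟩ := mem_commutantOrbit.mp hx
    exact mem_commutantOrbit.mpr ⟨S * S', hS.mul_left hS', rfl⟩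
  rw [Submodule.dense_iff_topologicalClosure_eq_top]
  by_contra hne
  exact hT ⟨M, (commutantOrbit T y).isClosed_topologicalClosure,
    (Submodule.ne_bot_iff M).mpr ⟨y, hyM, hy⟩, hne, hM⟩

theorem IsCompact.exists_bound_of_forall_exists_apply_mem {C U : Set X} (hC : IsCompact C)
    (hU : IsOpen U) {𝒮 : Set (X →L[𝕜] X)} (h : ∀ y ∈ C, ∃ S ∈ 𝒮, S y ∈ U) :
    ∃ c : ℝ, ∀ y ∈ C, ∃ S ∈ 𝒮, ‖S‖ ≤ c ∧ S y ∈ U := by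
  obtain ⟨𝒯, h𝒯𝒮, h𝒯, hC𝒯⟩ := hC.elim_finite_subcover_image (b := 𝒮) (c := fun S => S ⁻¹' U)
    (fun S _ => hU.preimage S.continuous) (fun y hy => by simpa using h y hy)
  obtain ⟨c, hc⟩ := (h𝒯.image (‖·‖)).bddAbove
  refine ⟨c, fun y hy => ?_⟩
  obtain ⟨S, hS, hSy⟩ := Set.mem_iUnion₂.mp (hC𝒯 hy)
  exact ⟨S, h𝒯𝒮 hS, hc (Set.mem_image_of_mem _ hS), hSy⟩

theorem exists_commute_norm_le_pow_apply_pow_mem {K : X →L[𝕜] X} {B : Set X} {c : ℝ}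
    (h : ∀ z ∈ B, ∃ S : X →L[𝕜] X, Commute S K ∧ ‖S‖ ≤ c ∧ S (K z) ∈ B) {x : X} (hx : x ∈ B) :
    ∀ n : ℕ, ∃ P : X →L[𝕜] X, Commute P K ∧ ‖P‖ ≤ c ^ n ∧ P ((K ^ n) x) ∈ B
  | 0 => ⟨1, Commute.one_left K, by rw [pow_zero]; exact ContinuousLinearMap.norm_id_le,
      by simpa using hx⟩
  | n + 1 => by
    obtain ⟨P, hPK, hP, hPx⟩ := exists_commute_norm_le_pow_apply_pow_mem h hx n
    obtain ⟨S, hSK, hS, hSx⟩ := h _ hPx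
    refine ⟨S * P, hSK.mul_left hPK, ?_, ?_⟩
    · calc ‖S * P‖ ≤ ‖S‖ * ‖P‖ := norm_mul_le _ _
        _ ≤ c * c ^ n := mul_le_mul hS hP (norm_nonneg _) ((norm_nonneg _).trans hS)
        _ = c ^ (n + 1) := (pow_succ' c n).symm
    · have : S * P * K ^ (n + 1) = S * (K * (P * K ^ n)) := by
        rw [pow_succ', mul_assoc, ← mul_assoc P, hPK.eq, mul_assoc]
      show (S * P * K ^ (n + 1)) x ∈ B
      rw [this]
      exact hSx

end NormedSpace

theorem tendsto_pow_mul_norm_pow_of_spectralRadius_eq_zero {A : Type*} [NormedRing A]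
    [NormedAlgebra ℂ A] [CompleteSpace A] {a : A} (ha : spectralRadius ℂ a = 0) (c : ℝ) :
    Tendsto (fun n : ℕ => c ^ n * ‖a ^ n‖) atTop (𝓝 0) := by
  have hroot : Tendsto (fun n : ℕ => ‖a ^ n‖ ^ (1 / n : ℝ)) atTop (𝓝 0) := by
    have := (ENNReal.tendsto_toReal ENNReal.zero_ne_top).comp
      (ha ▸ spectrum.pow_norm_pow_one_div_tendsto_nhds_spectralRadius a)
    simpa [Function.comp_def, ENNReal.toReal_ofReal, Real.rpow_nonneg] using this
  set ε : ℝ := 1 / (2 * (|c| + 1))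
  have hε : 0 < ε := by positivity
  have hcε : |c| * ε ≤ 1 / 2 := by
    rw [mul_one_div, div_le_div_iff₀ (by positivity) two_pos]
    linarith
  refine squeeze_zero_norm' ?_
    (tendsto_pow_atTop_nhds_zero_of_lt_one (r := 1 / 2) (by norm_num) (by norm_num))
  filter_upwards [hroot.eventually_lt_const hε, eventually_ne_atTop 0] with n hn hn0
  have hpow : ‖a ^ n‖ ≤ ε ^ n := by
    rw [← Real.rpow_inv_natCast_pow (norm_nonneg (a ^ n)) hn0, ← one_div]
    exact pow_le_pow_left₀ (by positivity) hn.le n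
  calc ‖c ^ n * ‖a ^ n‖‖ = |c| ^ n * ‖a ^ n‖ := by
        rw [norm_mul, norm_pow, Real.norm_eq_abs, norm_norm]
    _ ≤ |c| ^ n * ε ^ n := mul_le_mul_of_nonneg_left hpow (by positivity)
    _ = (|c| * ε) ^ n := (mul_pow _ _ _).symm
    _ ≤ (1 / 2) ^ n := pow_le_pow_left₀ (by positivity) hcε n

section Complex

variable {X : Type*} [NormedAddCommGroup X] [NormedSpace ℂ X] [CompleteSpace X]

theorem hasNontrivialHyperinvariantSubspace_of_spectralRadius_eq_zero {T K : X →L[ℂ] X}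
    (hK : IsCompactOperator K) (hK0 : K ≠ 0) (hKT : ∀ S : X →L[ℂ] X, Commute S T → Commute S K)
    (hρ : spectralRadius ℂ K = 0) : HasNontrivialHyperinvariantSubspace T := by
  by_contra hT
  obtain ⟨x₀, hKx₀⟩ : ∃ x₀, K x₀ ≠ 0 := by
    by_contra! h
    exact hK0 (ContinuousLinearMap.ext h)
  obtain ⟨δ, hδ, hδx₀, hδK⟩ : ∃ δ > 0, δ < ‖x₀‖ ∧ ‖K‖ * δ < ‖K x₀‖ := by
    obtain ⟨δ, hδ, hδK⟩ := exists_pos_mul_lt (norm_pos_iff.mpr hKx₀) ‖K‖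
    have hx₀ : 0 < ‖x₀‖ := norm_pos_iff.mpr fun h => hKx₀ (by rw [h, map_zero])
    refine ⟨min δ (‖x₀‖ / 2), by positivity, (min_le_right _ _).trans_lt (half_lt_self hx₀),
      (mul_le_mul_of_nonneg_left (min_le_left _ _) (norm_nonneg _)).trans_lt hδK⟩
  set B := closedBall x₀ δ
  have hC : IsCompact (closure (K '' B)) :=
    hK.isCompact_closure_image_of_isVonNBounded
      (NormedSpace.isVonNBounded_of_isBounded ℂ isBounded_closedBall)
  have h0C : (0 : X) ∉ closure (K '' B) := fun h0 => by
    have := closure_minimal (K.lipschitz.mapsTo_closedBall x₀ δ).image_subset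
      isClosed_closedBall h0
    rw [mem_closedBall, dist_zero_left] at this
    exact this.not_gt hδK
  obtain ⟨c, hc⟩ := hC.exists_bound_of_forall_exists_apply_mem (isOpen_ball (x := x₀))
    (𝒮 := {S | Commute S T}) fun y hy => by
      obtain ⟨_, hSy, hx⟩ := (dense_commutantOrbit hT (ne_of_mem_of_not_mem hy h0C))
        |>.inter_open_nonempty _ isOpen_ball (nonempty_ball.mpr hδ)
      obtain ⟨S, hS, rfl⟩ := mem_commutantOrbit.mp hx
      exact ⟨S, hS, hSy⟩
  have hiter := exists_commute_norm_le_pow_apply_pow_mem (B := B) (c := c) (fun z hz => by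
    obtain ⟨S, hS, hSc, hSz⟩ := hc (K z) (subset_closure (Set.mem_image_of_mem K hz))
    exact ⟨S, hKT S hS, hSc, ball_subset_closedBall hSz⟩) (mem_closedBall_self hδ.le)
  obtain ⟨n, hn⟩ := (((tendsto_pow_mul_norm_pow_of_spectralRadius_eq_zero hρ c).mul_const
    ‖x₀‖).eventually_lt_const (by simpa using hδx₀ : (0 : ℝ) * ‖x₀‖ < ‖x₀‖ - δ)).exists
  obtain ⟨P, -, hP, hPB⟩ := hiter n
  have key : ‖x₀‖ - δ ≤ c ^ n * ‖K ^ n‖ * ‖x₀‖ := calc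
    ‖x₀‖ - δ ≤ ‖P ((K ^ n) x₀)‖ := by
        linarith [norm_sub_norm_le x₀ (P ((K ^ n) x₀)), dist_eq_norm x₀ (P ((K ^ n) x₀)),
          mem_closedBall'.mp hPB]
    _ ≤ ‖P‖ * (‖K ^ n‖ * ‖x₀‖) :=
        (P.le_opNorm _).trans (mul_le_mul_of_nonneg_left ((K ^ n).le_opNorm _) (norm_nonneg _))
    _ ≤ c ^ n * ‖K ^ n‖ * ‖x₀‖ := by
        rw [mul_assoc]
        exact mul_le_mul_of_nonneg_right hP (by positivity)
  linarith

theorem hasNontrivialHyperinvariantSubspace_of_isCompactOperator (hX : ¬ FiniteDimensional ℂ X)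
    {T K : X →L[ℂ] X} (hK : IsCompactOperator K) (hK0 : K ≠ 0)
    (hKT : ∀ S : X →L[ℂ] X, Commute S T → Commute S K) :
    HasNontrivialHyperinvariantSubspace T := by
  have : Nontrivial X := by
    by_contra h
    exact hX (by rw [not_nontrivial_iff_subsingleton] at h; infer_instance)
  obtain ⟨μ, hμ, hρ⟩ := spectrum.exists_nnnorm_eq_spectralRadius K
  rcases eq_or_ne μ 0 with rfl | hμ0
  · exact hasNontrivialHyperinvariantSubspace_of_spectralRadius_eq_zero hK hK0 hKT
      (by simpa using hρ.symm)
  refine hasNontrivialHyperinvariantSubspace_of_hasEigenvalue hKT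
    ((hK.hasEigenvalue_iff_mem_spectrum hμ0).mpr hμ) fun hKμ => hX ?_
  have hid : (id : X → X) = μ⁻¹ • ⇑K := by
    funext x
    simp [hKμ, smul_smul, inv_mul_cancel₀ hμ0]
  exact FiniteDimensional.of_isCompactOperator_id (hid ▸ hK.smul μ⁻¹)

end Complex

theorem nonscalar_polynomially_compact_has_hyperinvariant_subspace_general
    {X : Type*} [NormedAddCommGroup X] [NormedSpace ℂ X] [CompleteSpace X]
    (T : X →L[ℂ] X)
    (hT : PolyCompact T)
    (hnonscalar : ∀ c : ℂ, T ≠ c • (1 : X →L[ℂ] X)) :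
    ∃ M : Submodule ℂ X, IsClosed (M : Set X) ∧ M ≠ ⊥ ∧ M ≠ ⊤ ∧
      ∀ S : X →L[ℂ] X, S * T = T * S → ∀ x ∈ M, S x ∈ M := by
  have : Nontrivial X := by
    by_contra h
    rw [not_nontrivial_iff_subsingleton] at h
    exact hnonscalar 0 (ContinuousLinearMap.ext fun _ => Subsingleton.elim _ _)
  by_cases hev : ∃ μ, HasEigenvalue (T : End ℂ X) μ
  · obtain ⟨μ, hμ⟩ := hev
    exact hasNontrivialHyperinvariantSubspace_of_hasEigenvalue (fun _ => id) hμ (hnonscalar μ)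
  push Not at hev
  obtain ⟨p, hp, hK⟩ := hT
  have hinj : Function.Injective (aeval T p) := by
    rw [← ContinuousLinearMap.coe_coe, ContinuousLinearMap.coe_aeval]
    exact injective_aeval_of_forall_not_hasEigenvalue hev hp
  have hX : ¬ FiniteDimensional ℂ X := fun _ => hev _ (exists_eigenvalue (T : End ℂ X)).choose_spec
  have hK0 : aeval T p ≠ 0 := fun h0 => by
    obtain ⟨x, hx⟩ := exists_ne (0 : X)
    exact hx (hinj (by simp [h0]))
  exact hasNontrivialHyperinvariantSubspace_of_isCompactOperator hX hK hK0 fun S hS =>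
    Algebra.commute_of_mem_adjoin_singleton_of_commute (aeval_mem_adjoin_singleton ℂ T) hS

theorem nonscalar_polynomially_compact_has_hyperinvariant_subspace
    {X : Type*} [NormedAddCommGroup X] [NormedSpace ℂ X] [CompleteSpace X]
    (hdim : 2 ≤ Module.rank ℂ X)
    (T : X →L[ℂ] X)
    (hT : PolyCompact T)
    (hnonscalar : ∀ c : ℂ, T ≠ c • (1 : X →L[ℂ] X)) :
    ∃ M : Submodule ℂ X, IsClosed (M : Set X) ∧ M ≠ ⊥ ∧ M ≠ ⊤ ∧
      ∀ S : X →L[ℂ] X, S * T = T * S → ∀ x ∈ M, S x ∈ M :=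
  nonscalar_polynomially_compact_has_hyperinvariant_subspace_general T hT hnonscalar
end
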